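/- Every nonempty packed word w can be written uniquely as w = v_1 * v_2 * ... * v_n where each v_i is a nonempty irreducible packed word and * is the shifted concatenation. Consequently, the monoid of packed words under shifted concatenation is a free monoid with basis the irreducible packed words. -/

import Mathlib

/-!
A word is packed exactly when its nonzero letters form the interval `1, …, sup w`. Hence if `u`
and `u * v` are packed, so is `v`. Existence of a factorization into irreducibles follows by
splitting reducible words and inducting on length. For uniqueness, compare two factorizations
`u * r = u' * r'` with `u, u'` irreducible: if `u` were strictly shorter, `u'` would be `u * v'`
with `v'` a nonempty prefix of `r`, packed by the remark above, contradicting irreducibility of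
`u'`. So `u = u'`, and since the shift is injective also `r = r'`; induct on the tail.
-/

/-- Renaming map for packing: sends letter `i` to the number of distinct
nonzero letters of `w` that are `≤ i` (so `0 ↦ 0`). -/
def packFun (w : List ℕ) (i : ℕ) : ℕ :=
  (w.toFinset.filter (fun j => j ≠ 0 ∧ j ≤ i)).card

/-- The pack operator: order-preserving relabeling of the nonzero letters onto `{1,…,k}`. -/
def pack (w : List ℕ) : List ℕ := w.map (packFun w)

/-- `wsup w` is the maximum letter of `w` (`0` for the empty word). -/
def wsup (w : List ℕ) : ℕ := w.foldr max 0

/-- `shiftT t w` replaces each nonzero letter `n` of `w` by `n + t`, fixing `0`. -/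
def shiftT (t : ℕ) (w : List ℕ) : List ℕ := w.map fun n => if n = 0 then 0 else n + t

/-- Shifted concatenation `u * v = u · T_{sup u}(v)`. -/
def sconcat (u v : List ℕ) : List ℕ := u ++ shiftT (wsup u) v

/-- A word is packed if it is fixed by `pack`. -/
def Packed (w : List ℕ) : Prop := pack w = w

/-- An irreducible packed word: nonempty, packed, and not a shifted concatenation
of two nonempty packed words. -/
def IrrPacked (w : List ℕ) : Prop :=
  Packed w ∧ w ≠ [] ∧
    ¬ ∃ u v : List ℕ, Packed u ∧ Packed v ∧ u ≠ [] ∧ v ≠ [] ∧ w = sconcat u v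

open Finset

section Wsup

variable {w : List ℕ}

theorem le_wsup {x : ℕ} (h : x ∈ w) : x ≤ wsup w := by
  induction w with
  | nil => simp at h
  | cons a t ih =>
    rcases List.mem_cons.1 h with rfl | h
    · exact le_max_left _ _
    · exact (ih h).trans (le_max_right _ _)

theorem wsup_mem (h : wsup w ≠ 0) : wsup w ∈ w := by
  induction w with
  | nil => exact absurd rfl h
  | cons a t ih =>
    change max a (wsup t) ≠ 0 at h
    change max a (wsup t) ∈ a :: t
    rcases max_choice a (wsup t) with hmax | hmax <;> rw [hmax] at h ⊢
    · exact List.mem_cons_self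
    · exact List.mem_cons_of_mem _ (ih h)

theorem wsup_map {f : ℕ → ℕ} (hf : Monotone f) (h0 : f 0 = 0) :
    wsup (w.map f) = f (wsup w) := by
  induction w with
  | nil => exact h0.symm
  | cons a t ih => exact (congrArg (max (f a)) ih).trans (hf.map_max).symm

theorem wsup_append (u v : List ℕ) : wsup (u ++ v) = max (wsup u) (wsup v) := by
  induction u with
  | nil => exact (max_eq_right (Nat.zero_le _)).symm
  | cons a t ih => exact (congrArg (max a) ih).trans (max_assoc _ _ _).symm

end Wsup

def shiftLetter (t n : ℕ) : ℕ := if n = 0 then 0 else n + t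

theorem shiftT_eq_map (t : ℕ) (w : List ℕ) : shiftT t w = w.map (shiftLetter t) := rfl

theorem shiftLetter_monotone (t : ℕ) : Monotone (shiftLetter t) := by
  intro a b hab
  unfold shiftLetter
  split_ifs <;> omega

theorem shiftLetter_injective (t : ℕ) : Function.Injective (shiftLetter t) := by
  intro a b hab
  unfold shiftLetter at hab
  split_ifs at hab <;> omega

theorem shiftT_injective (t : ℕ) : Function.Injective (shiftT t) :=
  List.map_injective_iff.2 (shiftLetter_injective t)

theorem length_shiftT (t : ℕ) (w : List ℕ) : (shiftT t w).length = w.length :=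
  List.length_map _

theorem shiftT_append (t : ℕ) (u v : List ℕ) :
    shiftT t (u ++ v) = shiftT t u ++ shiftT t v :=
  List.map_append

theorem shiftT_shiftT (s t : ℕ) (w : List ℕ) : shiftT s (shiftT t w) = shiftT (t + s) w := by
  simp only [shiftT_eq_map, List.map_map]
  refine List.map_congr_left fun n _ => ?_
  simp only [Function.comp_apply, shiftLetter]
  split_ifs <;> omega

theorem shiftT_zero (w : List ℕ) : shiftT 0 w = w := by
  simp only [shiftT_eq_map]
  exact List.map_id'' (fun n => by unfold shiftLetter; split_ifs <;> omega) w

theorem wsup_shiftT (t : ℕ) (w : List ℕ) : wsup (shiftT t w) = shiftLetter t (wsup w) :=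
  wsup_map (shiftLetter_monotone t) rfl

section ShiftedConcatenation

variable {u v : List ℕ}

theorem length_sconcat (u v : List ℕ) : (sconcat u v).length = u.length + v.length := by
  rw [sconcat, List.length_append, length_shiftT]

theorem sconcat_eq_nil_iff : sconcat u v = [] ↔ u = [] ∧ v = [] := by
  rw [← List.length_eq_zero_iff, ← List.length_eq_zero_iff, ← List.length_eq_zero_iff,
    length_sconcat]
  omega

theorem sconcat_nil (u : List ℕ) : sconcat u [] = u :=
  List.append_nil u

theorem nil_sconcat (v : List ℕ) : sconcat [] v = v :=
  shiftT_zero v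

theorem wsup_sconcat (u v : List ℕ) : wsup (sconcat u v) = wsup u + wsup v := by
  rw [sconcat, wsup_append, wsup_shiftT, shiftLetter]
  split_ifs <;> omega

theorem sconcat_assoc (u v x : List ℕ) :
    sconcat (sconcat u v) x = sconcat u (sconcat v x) := by
  change sconcat u v ++ shiftT (wsup (sconcat u v)) x = _
  rw [wsup_sconcat, sconcat, sconcat, sconcat, shiftT_append, shiftT_shiftT,
    List.append_assoc, Nat.add_comm]

theorem take_sconcat (u v : List ℕ) (k : ℕ) :
    (sconcat u v).take (u.length + k) = sconcat u (v.take k) := by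
  rw [sconcat, List.take_append, List.take_of_length_le (by omega), Nat.add_sub_cancel_left,
    shiftT_eq_map, ← List.map_take]
  rfl

theorem take_length_sconcat (u v : List ℕ) : (sconcat u v).take u.length = u := by
  simpa only [Nat.add_zero, List.take_zero, sconcat_nil] using take_sconcat u v 0

theorem foldr_sconcat_append (l₁ l₂ : List (List ℕ)) :
    (l₁ ++ l₂).foldr sconcat [] = sconcat (l₁.foldr sconcat []) (l₂.foldr sconcat []) := by
  induction l₁ with
  | nil => exact (nil_sconcat _).symm
  | cons a t ih => rw [List.cons_append, List.foldr_cons, List.foldr_cons, ih, sconcat_assoc]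

end ShiftedConcatenation

section Packed

def nonzeroLetters (w : List ℕ) : Finset ℕ := w.toFinset.filter (· ≠ 0)

variable {u v w : List ℕ}

@[simp]
theorem mem_nonzeroLetters {x : ℕ} : x ∈ nonzeroLetters w ↔ x ∈ w ∧ x ≠ 0 := by
  simp [nonzeroLetters]

theorem nonzeroLetters_subset_Icc : nonzeroLetters w ⊆ Icc 1 (wsup w) := fun x hx => by
  rw [mem_nonzeroLetters] at hx
  exact mem_Icc.2 ⟨Nat.one_le_iff_ne_zero.2 hx.2, le_wsup hx.1⟩

theorem nonzeroLetters_sconcat (u v : List ℕ) :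
    nonzeroLetters (sconcat u v) = nonzeroLetters u ∪ (nonzeroLetters v).image (· + wsup u) := by
  ext x
  simp only [sconcat, shiftT_eq_map, mem_union, mem_image, mem_nonzeroLetters, List.mem_append,
    List.mem_map, shiftLetter]
  constructor
  · rintro ⟨hx | ⟨y, hy, rfl⟩, hx0⟩
    · exact .inl ⟨hx, hx0⟩
    · split_ifs at hx0 ⊢ with hy0
      exacts [absurd rfl hx0, .inr ⟨y, ⟨hy, hy0⟩, rfl⟩]
  · rintro (hx | ⟨y, ⟨hy, hy0⟩, rfl⟩)
    · exact ⟨.inl hx.1, hx.2⟩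
    · exact ⟨.inr ⟨y, hy, if_neg hy0⟩, by omega⟩

theorem packFun_eq_card (w : List ℕ) (i : ℕ) :
    packFun w i = #{j ∈ nonzeroLetters w | j ≤ i} := by
  rw [packFun, nonzeroLetters, filter_filter]

theorem packed_iff_forall_packFun_eq : Packed w ↔ ∀ x ∈ w, packFun w x = x := by
  rw [Packed, pack]
  simpa using List.map_inj_left (f := packFun w) (g := id) (l := w)

theorem packed_iff_nonzeroLetters_eq_Icc : Packed w ↔ nonzeroLetters w = Icc 1 (wsup w) := by
  rw [packed_iff_forall_packFun_eq]
  constructor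
  · intro hw
    rcases eq_or_ne (wsup w) 0 with h0 | h0
    · simpa [h0] using (nonzeroLetters_subset_Icc (w := w))
    · refine eq_of_subset_of_card_le nonzeroLetters_subset_Icc ?_
      have hcard : #(nonzeroLetters w) = wsup w := by
        rw [← hw _ (wsup_mem h0), packFun_eq_card, filter_true_of_mem]
        exact fun x hx => le_wsup (mem_nonzeroLetters.1 hx).1
      rw [hcard, Nat.card_Icc]
      omega
  · intro hw x hx
    have hIcc : {j ∈ Icc 1 (wsup w) | j ≤ x} = Icc 1 x := by
      ext j
      simp only [mem_filter, mem_Icc]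
      have := le_wsup hx
      omega
    rw [packFun_eq_card, hw, hIcc, Nat.card_Icc, Nat.add_sub_cancel]

theorem Packed.of_sconcat (hu : Packed u) (huv : Packed (sconcat u v)) : Packed v := by
  rw [packed_iff_nonzeroLetters_eq_Icc] at hu huv ⊢
  rw [nonzeroLetters_sconcat, wsup_sconcat, hu] at huv
  refine nonzeroLetters_subset_Icc.antisymm fun j hj => ?_
  rw [mem_Icc] at hj
  have hshift : j + wsup u ∈ Icc 1 (wsup u) ∪ (nonzeroLetters v).image (· + wsup u) :=
    huv ▸ mem_Icc.2 (by omega)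
  rcases mem_union.1 hshift with hlow | hhigh
  · exact absurd (mem_Icc.1 hlow).2 (by omega)
  · obtain ⟨y, hy, hyj⟩ := mem_image.1 hhigh
    exact Nat.add_right_cancel hyj ▸ hy

end Packed

section Factorization

variable {u u' r r' : List ℕ}

theorem IrrPacked.length_le_of_sconcat_eq (hu' : IrrPacked u') (hu : Packed u) (hne : u ≠ [])
    (h : sconcat u r = sconcat u' r') : u'.length ≤ u.length := by
  by_contra! hlt
  -- otherwise `u'` is `u * v'` with `v'` a nonempty prefix of `r`, packed because `u` and `u'` are
  have hfactor : u' = sconcat u (r.take (u'.length - u.length)) := by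
    rw [← take_sconcat, Nat.add_sub_cancel' hlt.le, h, take_length_sconcat]
  have hrest : r.take (u'.length - u.length) ≠ [] := by
    rintro hnil
    rw [hnil, sconcat_nil] at hfactor
    exact hlt.ne' (congrArg List.length hfactor)
  exact hu'.2.2 ⟨u, _, hu, hu.of_sconcat (hfactor ▸ hu'.1), hne, hrest, hfactor⟩

theorem IrrPacked.sconcat_cancel (hu : IrrPacked u) (hu' : IrrPacked u')
    (h : sconcat u r = sconcat u' r') : u = u' ∧ r = r' := by
  have hlen : u.length = u'.length :=
    le_antisymm (hu.length_le_of_sconcat_eq hu'.1 hu'.2.1 h.symm)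
      (hu'.length_le_of_sconcat_eq hu.1 hu.2.1 h)
  obtain ⟨rfl, hr⟩ := List.append_inj h hlen
  exact ⟨rfl, shiftT_injective _ hr⟩

theorem exists_irrPacked_factorization {w : List ℕ} (hw : Packed w) :
    ∃ l : List (List ℕ), (∀ v ∈ l, IrrPacked v) ∧ l.foldr sconcat [] = w := by
  by_cases hirr : IrrPacked w
  · exact ⟨[w], by simpa using hirr, sconcat_nil w⟩
  rcases eq_or_ne w [] with rfl | hne
  · exact ⟨[], by simp, rfl⟩
  obtain ⟨u, v, hu, hv, hune, hvne, rfl⟩ :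
      ∃ u v : List ℕ, Packed u ∧ Packed v ∧ u ≠ [] ∧ v ≠ [] ∧ w = sconcat u v := by
    by_contra hred
    exact hirr ⟨hw, hne, hred⟩
  have : u.length < (sconcat u v).length := by
    rw [length_sconcat]; exact Nat.lt_add_of_pos_right (List.length_pos_iff.2 hvne)
  have : v.length < (sconcat u v).length := by
    rw [length_sconcat]; exact Nat.lt_add_of_pos_left (List.length_pos_iff.2 hune)
  obtain ⟨lu, hlu, rfl⟩ := exists_irrPacked_factorization hu
  obtain ⟨lv, hlv, rfl⟩ := exists_irrPacked_factorization hv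
  refine ⟨lu ++ lv, fun x hx => ?_, foldr_sconcat_append lu lv⟩
  exact (List.mem_append.1 hx).elim (hlu x) (hlv x)
termination_by w.length

theorem eq_of_foldr_sconcat_eq : ∀ {l₁ l₂ : List (List ℕ)}, (∀ v ∈ l₁, IrrPacked v) →
    (∀ v ∈ l₂, IrrPacked v) → l₁.foldr sconcat [] = l₂.foldr sconcat [] → l₁ = l₂
  | [], [], _, _, _ => rfl
  | [], b :: _, _, h₂, h =>
    absurd (sconcat_eq_nil_iff.1 h.symm).1 (h₂ b List.mem_cons_self).2.1
  | a :: _, [], h₁, _, h =>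
    absurd (sconcat_eq_nil_iff.1 h).1 (h₁ a List.mem_cons_self).2.1
  | a :: _, b :: _, h₁, h₂, h => by
    obtain ⟨rfl, htail⟩ := (h₁ a List.mem_cons_self).sconcat_cancel (h₂ b List.mem_cons_self) h
    rw [eq_of_foldr_sconcat_eq (fun v hv => h₁ v (List.mem_cons_of_mem _ hv))
      (fun v hv => h₂ v (List.mem_cons_of_mem _ hv)) htail]

end Factorization

/-- Every nonempty packed word factors uniquely as a shifted concatenation of
nonempty irreducible packed words; hence the monoid of packed words under shifted
concatenation is free on the irreducible packed words. -/
theorem packed_unique_factorization (w : List ℕ) (hw : Packed w) (hne : w ≠ []) :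
    ∃! l : List (List ℕ),
      l ≠ [] ∧ (∀ v ∈ l, IrrPacked v) ∧ l.foldr sconcat [] = w := by
  obtain ⟨l, hirr, rfl⟩ := exists_irrPacked_factorization hw
  refine ⟨l, ⟨?_, hirr, rfl⟩, fun l' ⟨_, hirr', h⟩ => eq_of_foldr_sconcat_eq hirr' hirr h⟩
  rintro rfl
  exact hne rfl
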